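/- arXiv:1504.02453 — 3 statements merged into one kernel-verified Lean document; each statement's English description precedes it below -/
import Mathlib

section
/- The set of functions of the form c + g - g∘T with c ∈ ℝ and g ∈ L^∞ is dense in L¹(μ), when T is an ergodic measure-preserving automorphism of the probability space (Ω, A, μ). -/
/-!
Approximate `f` in `L¹` by a simple function `s` and put `c = ∫ s`, `h = s - c`. With `S_k` the
Birkhoff sums and `A_N = S_N / N` the Birkhoff averages of `h`, telescoping gives
`h - A_N = G - G ∘ T` for the bounded function `G = N⁻¹ ∑_{k<N} S_k`. By von Neumann's mean
ergodic theorem `A_N` tends in `L²` to the projection of `h` onto the `T`-invariant functions;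
by ergodicity these are the constants, to which the mean-zero `h` is orthogonal. Hence
`A_N → 0` in `L²`, so in `L¹`, and `f - (c + G - G ∘ T) = (f - s) + A_N` is small.
-/

open MeasureTheory Filter Finset
open scoped ENNReal Topology

section Coboundary

variable {α M : Type*} (R : Type*) [DivisionRing R] [CharZero R] [AddCommGroup M] [Module R M]

def birkhoffSumAverage (T : α → α) (g : α → M) (n : ℕ) (x : α) : M :=
  (n : R)⁻¹ • ∑ k ∈ range n, birkhoffSum T g k x

theorem sub_birkhoffAverage_eq_birkhoffSumAverage_sub (T : α → α) (g : α → M) {n : ℕ}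
    (hn : n ≠ 0) (x : α) :
    g x - birkhoffAverage R T g n x =
      birkhoffSumAverage R T g n x - birkhoffSumAverage R T g n (T x) := by
  have hstep : ∀ k, birkhoffSum T g k x - birkhoffSum T g k (T x) =
      g x - (birkhoffSum T g (k + 1) x - birkhoffSum T g k x) := fun k => by
    rw [birkhoffSum_succ']; abel
  have htel : ∑ k ∈ range n, (birkhoffSum T g k x - birkhoffSum T g k (T x)) =
      n • g x - birkhoffSum T g n x := by
    simp only [hstep, sum_sub_distrib, sum_range_sub (birkhoffSum T g · x), sum_const, card_range,
      birkhoffSum_zero, sub_zero]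
  rw [birkhoffSumAverage, birkhoffSumAverage, ← smul_sub, ← sum_sub_distrib, htel, smul_sub,
    birkhoffAverage, ← Nat.cast_smul_eq_nsmul R, smul_smul, inv_mul_cancel₀ (by exact_mod_cast hn),
    one_smul]

end Coboundary

namespace MeasureTheory

section MemLp

variable {α E : Type*} [MeasurableSpace α] {μ : Measure α} [NormedAddCommGroup E] {p : ℝ≥0∞}
  {T : α → α} {g : α → E}

theorem MemLp.birkhoffSum (hg : MemLp g p μ) (hT : MeasurePreserving T μ μ) (n : ℕ) :
    MemLp (birkhoffSum T g n) p μ := by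
  have := memLp_finsetSum' (range n) fun k _ => hg.comp_measurePreserving (hT.iterate k)
  convert this using 1
  ext x; simp [_root_.birkhoffSum]

theorem MemLp.birkhoffAverage {𝕜 : Type*} [NormedField 𝕜] [NormedSpace 𝕜 E] (hg : MemLp g p μ)
    (hT : MeasurePreserving T μ μ) (n : ℕ) : MemLp (birkhoffAverage 𝕜 T g n) p μ :=
  (hg.birkhoffSum hT n).const_smul _

theorem MemLp.birkhoffSumAverage {𝕜 : Type*} [NormedField 𝕜] [CharZero 𝕜] [NormedSpace 𝕜 E]
    (hg : MemLp g p μ) (hT : MeasurePreserving T μ μ) (n : ℕ) :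
    MemLp (birkhoffSumAverage 𝕜 T g n) p μ := by
  convert (memLp_finsetSum' (range n) fun k _ => hg.birkhoffSum hT k).const_smul (n : 𝕜)⁻¹
    using 1
  ext x; simp [_root_.birkhoffSumAverage]

end MemLp

section Koopman

variable {α E : Type*} [MeasurableSpace α] {μ : Measure α} [NormedAddCommGroup E] {p : ℝ≥0∞}
  {T : α → α}

theorem Lp.coeFn_birkhoffSum_compMeasurePreserving (hT : MeasurePreserving T μ μ)
    (n : ℕ) (u : Lp E p μ) :
    ⇑(birkhoffSum (Lp.compMeasurePreserving T hT) id n u) =ᵐ[μ] birkhoffSum T u n := by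
  induction n generalizing u with
  | zero => simpa using Lp.coeFn_zero E p μ
  | succ n ih =>
    have hcomp := hT.quasiMeasurePreserving.birkhoffSum_ae_eq_of_ae_eq
      (Lp.coeFn_compMeasurePreserving u hT) n
    filter_upwards [Lp.coeFn_add u (birkhoffSum (Lp.compMeasurePreserving T hT) id n
      (Lp.compMeasurePreserving T hT u)), ih (Lp.compMeasurePreserving T hT u), hcomp]
      with x h1 h2 h3
    rw [birkhoffSum_succ', id, h1, Pi.add_apply, h2, h3, birkhoffSum_succ']
    simp only [_root_.birkhoffSum, Function.comp_apply, ← Function.iterate_succ_apply,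
      Function.iterate_succ_apply']

theorem Lp.coeFn_birkhoffAverage_compMeasurePreserving {𝕜 : Type*} [NormedField 𝕜]
    [NormedSpace 𝕜 E] (hT : MeasurePreserving T μ μ) (n : ℕ) (u : Lp E p μ) :
    ⇑(birkhoffAverage 𝕜 (Lp.compMeasurePreserving T hT) id n u) =ᵐ[μ]
      birkhoffAverage 𝕜 T u n := by
  filter_upwards [Lp.coeFn_smul (n : 𝕜)⁻¹ (birkhoffSum (Lp.compMeasurePreserving T hT) id n u),
    Lp.coeFn_birkhoffSum_compMeasurePreserving hT n u] with x h1 h2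
  rw [birkhoffAverage, h1, Pi.smul_apply, h2, birkhoffAverage]

end Koopman

end MeasureTheory

section MeanErgodic

variable {α : Type*} [MeasurableSpace α] {μ : Measure α} {T : α → α}

theorem Ergodic.tendsto_birkhoffAverage_compMeasurePreserving_of_integral_eq_zero
    (hT : Ergodic T μ) (u : Lp ℝ 2 μ) (hu : ∫ x, u x ∂μ = 0) :
    Tendsto (birkhoffAverage ℝ (Lp.compMeasurePreserving T hT.toMeasurePreserving) id · u) atTop
      (𝓝 0) := by
  set U :=
    (Lp.compMeasurePreservingₗᵢ ℝ T hT.toMeasurePreserving (E := ℝ) (p := 2)).toContinuousLinearMap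
  have hUnorm : ‖U‖ ≤ 1 := LinearIsometry.norm_toContinuousLinearMap_le _
  have hu_orth : u ∈ (U.eqLocus (1 : Lp ℝ 2 μ →L[ℝ] Lp ℝ 2 μ))ᗮ := by
    rw [Submodule.mem_orthogonal]
    intro v (hv : U v = v)
    have hv_inv := Lp.coeFn_compMeasurePreserving v hT.toMeasurePreserving
    rw [show Lp.compMeasurePreserving T _ v = v from hv] at hv_inv
    obtain ⟨d, hd⟩ := hT.ae_eq_const_of_ae_eq_comp_ae (Lp.aestronglyMeasurable v) hv_inv.symm
    rw [L2.inner_def, integral_congr_ae (hd.mono fun x hx => by rw [hx])]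
    simp [integral_mul_const, hu]
  have := U.tendsto_birkhoffAverage_orthogonalProjection hUnorm u
  rw [Submodule.orthogonalProjectionOnto_apply_of_mem_orthogonal hu_orth] at this
  exact this

theorem Ergodic.tendsto_eLpNorm_birkhoffAverage_of_integral_eq_zero [IsProbabilityMeasure μ]
    (hT : Ergodic T μ) {h : α → ℝ} (hh : MemLp h 2 μ) (hint : ∫ x, h x ∂μ = 0) {q : ℝ≥0∞}
    (hq : q ≤ 2) : Tendsto (fun n => eLpNorm (birkhoffAverage ℝ T h n) q μ) atTop (𝓝 0) := by
  set u := hh.toLp h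
  have hu : ∫ x, u x ∂μ = 0 := by rwa [integral_congr_ae hh.coeFn_toLp]
  have hL2 : Tendsto (fun n => eLpNorm (birkhoffAverage ℝ T h n) 2 μ) atTop (𝓝 0) := by
    have := (hT.tendsto_birkhoffAverage_compMeasurePreserving_of_integral_eq_zero u hu).enorm
    simp only [enorm_zero, Lp.enorm_def] at this
    refine this.congr fun n => eLpNorm_congr_ae ?_
    exact (Lp.coeFn_birkhoffAverage_compMeasurePreserving _ n u).trans
      (hT.quasiMeasurePreserving.birkhoffAverage_ae_eq_of_ae_eq ℝ hh.coeFn_toLp n)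
  refine tendsto_of_tendsto_of_tendsto_of_le_of_le tendsto_const_nhds hL2 (fun _ => zero_le)
    fun n => eLpNorm_le_eLpNorm_of_exponent_le hq ?_
  exact (hh.birkhoffAverage hT.toMeasurePreserving n).aestronglyMeasurable

end MeanErgodic

theorem stmt7_general {Ω : Type*} [MeasurableSpace Ω] (μ : Measure Ω) [IsProbabilityMeasure μ]
    (T : Ω → Ω) (hTerg : Ergodic T μ)
    (f : Ω → ℝ) (hf : Integrable f μ) (ε : ℝ) (hε : 0 < ε) :
    ∃ (c : ℝ) (g : Ω → ℝ), MemLp g ⊤ μ ∧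
      eLpNorm (fun ω => f ω - (c + g ω - g (T ω))) 1 μ < ENNReal.ofReal ε := by
  have hε2 : 0 < ENNReal.ofReal (ε / 2) := ENNReal.ofReal_pos.2 (half_pos hε)
  obtain ⟨s, hfs, -⟩ := (memLp_one_iff_integrable.2 hf).exists_simpleFunc_eLpNorm_sub_lt
    ENNReal.one_ne_top hε2.ne'
  have hs : MemLp s ⊤ μ := s.memLp_top μ
  set c := ∫ x, s x ∂μ
  set h : Ω → ℝ := fun x => s x - c
  have hh : MemLp h ⊤ μ := hs.sub (memLp_const c)
  have hint : ∫ x, h x ∂μ = 0 := by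
    simp [h, integral_sub (hs.integrable le_top) (integrable_const c), c]
  have hA := hTerg.tendsto_eLpNorm_birkhoffAverage_of_integral_eq_zero (hh.mono_exponent le_top)
    hint one_le_two
  obtain ⟨N, hN, hAN⟩ := ((eventually_ne_atTop 0).and (hA.eventually_lt_const hε2)).exists
  refine ⟨c, birkhoffSumAverage ℝ T h N, hh.birkhoffSumAverage hTerg.toMeasurePreserving N, ?_⟩
  calc _ = eLpNorm ((f - ⇑s) + birkhoffAverage ℝ T h N) 1 μ := by
        congr 1; ext x
        have := sub_birkhoffAverage_eq_birkhoffSumAverage_sub ℝ T h hN x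
        simp only [Pi.add_apply, Pi.sub_apply, h] at this ⊢
        linarith
    _ ≤ eLpNorm (f - ⇑s) 1 μ + eLpNorm (birkhoffAverage ℝ T h N) 1 μ :=
        eLpNorm_add_le (hf.sub (hs.integrable le_top)).aestronglyMeasurable
          (hh.birkhoffAverage hTerg.toMeasurePreserving N).aestronglyMeasurable le_rfl
    _ < ENNReal.ofReal (ε / 2) + ENNReal.ofReal (ε / 2) := ENNReal.add_lt_add hfs hAN
    _ = ENNReal.ofReal ε := by rw [← ENNReal.ofReal_add (by positivity) (by positivity), add_halves]

/-- The set of functions `c + g - g∘T`, `c ∈ ℝ`, `g ∈ L^∞`, is dense in `L¹(μ)` for an ergodic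
measure-preserving `T`. -/
theorem stmt7 {Ω : Type*} [MeasurableSpace Ω] (μ : Measure Ω) [IsProbabilityMeasure μ]
    (T : Ω → Ω) (hT : MeasurePreserving T μ μ) (hTerg : Ergodic T μ)
    (f : Ω → ℝ) (hf : Integrable f μ) (ε : ℝ) (hε : 0 < ε) :
    ∃ (c : ℝ) (g : Ω → ℝ), MemLp g ⊤ μ ∧
      eLpNorm (fun ω => f ω - (c + g ω - g (T ω))) 1 μ < ENNReal.ofReal ε :=
  stmt7_general μ T hTerg f hf ε hε
end

section
/- Let (U^i e)_{i∈ℤ} be an orthonormal martingale difference sequence (‖e‖₂ = 1) and V ≥ 1. For f_V = e - (1/V) ∑_{i=1}^{V} U^{-i} e and S_n(f_V) = ∑_{j=0}^{n-1} U^j f_V, one has ‖S_n(f_V)‖₂ ≤ √(2n) for all n ≥ 1. -/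
open MeasureTheory Finset
open scoped RealInnerProductSpace

/-!
Write `v k = U^k e`. Then `S_n(f_V) = A - V⁻¹ ∑_{i=1}^V W_i` with `A = ∑_{j<n} v j` and
`W_i = ∑_{j<n} v (j - i)`. By orthonormality `‖A‖ = ‖W_i‖ = √n`, so the average of the `W_i` has
norm at most `√n`; and since all inner products `⟪v k, v l⟫` are `0` or `1`, `A` has nonnegative
inner product with that average. Hence `‖S_n(f_V)‖² ≤ ‖A‖² + n = 2n`.
-/

theorem norm_sub_sq_le_of_inner_nonneg {F : Type*} [NormedAddCommGroup F] [InnerProductSpace ℝ F]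
    {x y : F} (h : 0 ≤ ⟪x, y⟫) : ‖x - y‖ ^ 2 ≤ ‖x‖ ^ 2 + ‖y‖ ^ 2 := by
  rw [norm_sub_sq_real]
  linarith

theorem norm_inv_card_smul_sum_le {E ι : Type*} [SeminormedAddCommGroup E] [NormedSpace ℝ E]
    {s : Finset ι} {w : ι → E} {C : ℝ} (hC : 0 ≤ C) (hw : ∀ i ∈ s, ‖w i‖ ≤ C) :
    ‖(#s : ℝ)⁻¹ • ∑ i ∈ s, w i‖ ≤ C := by
  rw [norm_smul, norm_inv, Real.norm_natCast]
  calc (#s : ℝ)⁻¹ * ‖∑ i ∈ s, w i‖ ≤ (#s : ℝ)⁻¹ * (#s * C) := by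
        gcongr
        exact (norm_sum_le _ _).trans (by simpa using sum_le_card_nsmul s _ C hw)
    _ ≤ C := by
        rw [← mul_assoc]
        exact mul_le_of_le_one_left hC (inv_mul_le_one_of_le₀ le_rfl (Nat.cast_nonneg _))

namespace Orthonormal

variable {E ι : Type*} [NormedAddCommGroup E] [InnerProductSpace ℝ E] {v : ι → E}

theorem norm_sum_eq_sqrt_card (hv : Orthonormal ℝ v) (s : Finset ι) :
    ‖∑ i ∈ s, v i‖ = √(#s : ℝ) := by
  have h := hv.inner_sum (fun _ => 1) (fun _ => 1) s
  simp only [one_smul, real_inner_self_eq_norm_sq, conj_trivial, mul_one, sum_const,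
    nsmul_eq_mul] at h
  rw [← h, Real.sqrt_sq (norm_nonneg _)]

theorem inner_sum_sum_nonneg (hv : Orthonormal ℝ v) {α β : Type*} (f : α → ι) (g : β → ι)
    (s : Finset α) (t : Finset β) : 0 ≤ ⟪∑ a ∈ s, v (f a), ∑ b ∈ t, v (g b)⟫ := by
  classical
  simp only [sum_inner, inner_sum, orthonormal_iff_ite.mp hv]
  positivity

theorem norm_sum_sub_average_le {v : ℤ → E} (hv : Orthonormal ℝ v) (V n : ℕ) :
    ‖∑ j ∈ range n, (v j - (V : ℝ)⁻¹ • ∑ i ∈ Icc 1 V, v (j - i))‖ ≤ √(2 * n) := by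
  set A := ∑ j ∈ range n, v j
  set W : ℕ → E := fun i => ∑ j ∈ range n, v (j - i)
  have hS : ∑ j ∈ range n, (v j - (V : ℝ)⁻¹ • ∑ i ∈ Icc 1 V, v (j - i))
      = A - (V : ℝ)⁻¹ • ∑ i ∈ Icc 1 V, W i := by
    rw [sum_sub_distrib, ← smul_sum, sum_comm]
  have hA : ‖A‖ = √n := by
    simpa using (hv.comp _ Nat.cast_injective).norm_sum_eq_sqrt_card (range n)
  have hW (i : ℕ) : ‖W i‖ = √n := by
    have hinj : Function.Injective fun j : ℕ => (j : ℤ) - i := fun a b h => by simpa using h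
    simpa using (hv.comp _ hinj).norm_sum_eq_sqrt_card (range n)
  have hAW : 0 ≤ ⟪A, (V : ℝ)⁻¹ • ∑ i ∈ Icc 1 V, W i⟫ := by
    rw [real_inner_smul_right, inner_sum]
    exact mul_nonneg (by positivity) (sum_nonneg fun i _ => hv.inner_sum_sum_nonneg _ _ _ _)
  have havg : ‖(V : ℝ)⁻¹ • ∑ i ∈ Icc 1 V, W i‖ ≤ √n := by
    have h := norm_inv_card_smul_sum_le (s := Icc 1 V) (Real.sqrt_nonneg n) fun i _ => (hW i).le
    rwa [Nat.card_Icc, add_tsub_cancel_right] at h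
  rw [hS]
  refine Real.le_sqrt_of_sq_le ((norm_sub_sq_le_of_inner_nonneg hAW).trans ?_)
  calc ‖A‖ ^ 2 + ‖(V : ℝ)⁻¹ • ∑ i ∈ Icc 1 V, W i‖ ^ 2 ≤ (√n) ^ 2 + (√n) ^ 2 := by
        rw [hA]; gcongr
    _ = 2 * (n : ℝ) := by rw [Real.sq_sqrt (Nat.cast_nonneg n)]; ring

end Orthonormal

theorem LinearIsometryEquiv.zpow_apply_zpow {R E : Type*} [Semiring R] [SeminormedAddCommGroup E]
    [Module R E] (U : E ≃ₗᵢ[R] E) (a b : ℤ) (x : E) : (U ^ a) ((U ^ b) x) = (U ^ (a + b)) x := by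
  rw [zpow_add]; rfl

theorem stmt10_general {Ω : Type*} [MeasurableSpace Ω] (μ : Measure Ω)
    (U : Lp ℝ 2 μ ≃ₗᵢ[ℝ] Lp ℝ 2 μ)
    (e : Lp ℝ 2 μ) (hON : Orthonormal ℝ (fun i : ℤ => (U ^ i) e))
    (V : ℕ) (n : ℕ) :
    ‖∑ j ∈ Finset.range n,
        (U ^ (j : ℤ)) (e - (V : ℝ)⁻¹ • ∑ i ∈ Finset.Icc 1 V, (U ^ (-(i : ℤ))) e)‖
      ≤ Real.sqrt (2 * n) := by
  simp_rw [map_sub, map_smul, map_sum, U.zpow_apply_zpow, ← sub_eq_add_neg]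
  exact hON.norm_sum_sub_average_le V n

/-- For `f_V = e - (1/V) ∑_{i=1}^{V} U^{-i} e` built over an orthonormal family `(U^i e)`,
`‖S_n(f_V)‖₂ ≤ √(2n)`. -/
theorem stmt10 {Ω : Type*} [MeasurableSpace Ω] (μ : Measure Ω) [IsProbabilityMeasure μ]
    (U : Lp ℝ 2 μ ≃ₗᵢ[ℝ] Lp ℝ 2 μ)
    (T : Ω → Ω) (hT : MeasurePreserving T μ μ)
    (hU : ∀ (h : Lp ℝ 2 μ), (U h : Ω → ℝ) =ᵐ[μ] fun ω => h (T ω))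
    (e : Lp ℝ 2 μ) (hON : Orthonormal ℝ (fun i : ℤ => (U ^ i) e))
    (V : ℕ) (hV : 1 ≤ V) (n : ℕ) (hn : 1 ≤ n) :
    ‖∑ j ∈ Finset.range n,
        (U ^ (j : ℤ)) (e - (V : ℝ)⁻¹ • ∑ i ∈ Finset.Icc 1 V, (U ^ (-(i : ℤ))) e)‖
      ≤ Real.sqrt (2 * n) :=
  stmt10_general μ U e hON V n
end

section
/- Let X be a symmetric real random variable (X and -X have the same law) on a probability space, and (a_n) real constants. If the laws of X_n + a_n converge weakly to the standard normal N(0,1), where each X_n is symmetric, then a_n → 0 and the laws of X_n converge weakly to N(0,1). -/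
/-!
Symmetry makes the characteristic function `c_n(t)` of `X_n` real, so the characteristic function
of `X_n + a_n` is `c_n(t) e^{i t a_n}`. Its limit `e^{-t²/2}` is real and nonzero, and the phase
`e^{2 i t a_n}` is the ratio of `c_n(t) e^{i t a_n}` to its conjugate, hence tends to `1` for
every `t`. Integrating `e^{i t a_n} → 1` in `t` against `N(0,1)` gives `e^{-a_n²/2} → 1`, so
`a_n → 0`, and Lévy's continuity theorem transfers the convergence from `X_n + a_n` to `X_n`.
-/

open MeasureTheory ProbabilityTheory Filter Topology Complex ComplexConjugate

lemma conj_charFun_map_of_map_neg {Ω : Type*} [MeasurableSpace Ω] {μ : Measure Ω} {X : Ω → ℝ}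
    (hX : AEMeasurable X μ) (hsymm : μ.map X = μ.map (fun ω => -X ω)) (t : ℝ) :
    conj (charFun (μ.map X) t) = charFun (μ.map X) t := by
  rw [← charFun_neg, ← neg_one_mul, ← charFun_map_mul_comp hX]
  simp only [neg_one_mul, ← hsymm]

lemma charFun_gaussianReal_zero_one (t : ℝ) :
    charFun (gaussianReal 0 1) t = Real.exp (-(t ^ 2 / 2)) := by
  rw [charFun_gaussianReal]
  push_cast
  ring_nf

lemma tendsto_probabilityMeasure_map_iff {Ω E ι : Type*} [MeasurableSpace Ω]
    [TopologicalSpace E] [MeasurableSpace E] [OpensMeasurableSpace E] {l : Filter ι}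
    {μ : Measure Ω} [IsProbabilityMeasure μ] {Y : ι → Ω → E} (hY : ∀ i, AEMeasurable (Y i) μ)
    {P : ProbabilityMeasure E} :
    Tendsto (β := ProbabilityMeasure E)
        (fun i => ⟨μ.map (Y i), Measure.isProbabilityMeasure_map (hY i)⟩) l (𝓝 P) ↔
      ∀ f : BoundedContinuousFunction E ℝ,
        Tendsto (fun i => ∫ ω, f (Y i ω) ∂μ) l (𝓝 (∫ x, f x ∂P)) := by
  refine ProbabilityMeasure.tendsto_iff_forall_integral_tendsto.trans (forall_congr' fun f => ?_)
  exact tendsto_congr fun i => integral_map (hY i) f.continuous.aestronglyMeasurable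

lemma tendsto_cexp_two_mul_of_tendsto_mul_cexp {ι : Type*} {l : Filter ι} {θ : ι → ℝ}
    {c : ι → ℂ} (hc : ∀ i, conj (c i) = c i) {g : ℝ} (hg : g ≠ 0)
    (h : Tendsto (fun i => c i * cexp (θ i * I)) l (𝓝 g)) :
    Tendsto (fun i => cexp (2 * θ i * I)) l (𝓝 1) := by
  have hg' : (g : ℂ) ≠ 0 := ofReal_ne_zero.2 hg
  have hconj : Tendsto (fun i => conj (c i * cexp (θ i * I))) l (𝓝 g) := by
    have := (continuous_conj.tendsto (g : ℂ)).comp h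
    rwa [conj_ofReal] at this
  have hquot := h.div hconj hg'
  rw [div_self hg'] at hquot
  refine hquot.congr' ?_
  filter_upwards [h.eventually_ne hg'] with i hi
  rw [Pi.div_apply, div_eq_iff ((map_ne_zero _).2 hi), map_mul, hc, ← exp_conj, map_mul,
    conj_ofReal, conj_I, mul_left_comm, ← Complex.exp_add]
  ring_nf

lemma tendsto_zero_of_tendsto_exp_neg_sq {ι : Type*} {l : Filter ι} {b : ι → ℝ}
    (h : Tendsto (fun i => Real.exp (-(b i ^ 2 / 2))) l (𝓝 1)) : Tendsto b l (𝓝 0) := by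
  have hlog := h.log one_ne_zero
  simp only [Real.log_exp, Real.log_one] at hlog
  have hsq : Tendsto (fun i => b i ^ 2) l (𝓝 0) := by
    convert hlog.const_mul (-2) using 2 <;> ring
  have habs : Tendsto (fun i => |b i|) l (𝓝 0) := by
    simpa [Real.sqrt_sq_eq_abs] using hsq.sqrt
  exact (tendsto_zero_iff_abs_tendsto_zero b).2 habs

lemma tendsto_zero_of_forall_tendsto_cexp_mul {ι : Type*} {l : Filter ι} [l.IsCountablyGenerated]
    {b : ι → ℝ} (h : ∀ t : ℝ, Tendsto (fun i => cexp (t * b i * I)) l (𝓝 1)) :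
    Tendsto b l (𝓝 0) := by
  have hchar : Tendsto (fun i => charFun (gaussianReal 0 1) (b i)) l (𝓝 1) := by
    simp_rw [charFun_apply_real]
    have := tendsto_integral_filter_of_dominated_convergence (μ := gaussianReal 0 1)
      (fun _ => (1 : ℝ))
      (Eventually.of_forall fun i =>
        (by fun_prop : Continuous fun x : ℝ => cexp (b i * x * I)).aestronglyMeasurable)
      (Eventually.of_forall fun i => ae_of_all _ fun x => by
        rw [← ofReal_mul, norm_exp_ofReal_mul_I])
      (integrable_const _) (ae_of_all _ fun x => by simpa only [mul_comm] using h x)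
    simpa using this
  simp_rw [charFun_gaussianReal_zero_one] at hchar
  exact tendsto_zero_of_tendsto_exp_neg_sq (tendsto_ofReal_iff.1 hchar)

lemma tendsto_charFun_of_tendsto_charFun_map_add_const {E ι : Type*} [NormedAddCommGroup E]
    [InnerProductSpace ℝ E] [MeasurableSpace E] [BorelSpace E] {l : Filter ι}
    {μ : ι → Measure E} {a : ι → E} (ha : Tendsto a l (𝓝 0)) {t : E} {z : ℂ}
    (h : Tendsto (fun i => charFun ((μ i).map (· + a i)) t) l (𝓝 z)) :
    Tendsto (fun i => charFun (μ i) t) l (𝓝 z) := by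
  have hexp : Tendsto (fun i => cexp (inner ℝ (a i) t * I)) l (𝓝 1) := by
    simpa [Function.comp_def] using
      ((by fun_prop : Continuous fun x : E => cexp (inner ℝ x t * I)).tendsto 0).comp ha
  simp_rw [charFun_map_add_const] at h
  have hquot := h.div hexp one_ne_zero
  rw [div_one] at hquot
  exact hquot.congr fun i => mul_div_cancel_right₀ _ (Complex.exp_ne_zero _)

/-- If `X_n` are symmetric random variables, `a_n` constants, and the laws of `X_n + a_n`
converge weakly to `N(0,1)`, then `a_n → 0` and the laws of `X_n` converge weakly to `N(0,1)`. -/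
theorem stmt17 {Ω : Type*} [MeasurableSpace Ω] (μ : Measure Ω) [IsProbabilityMeasure μ]
    (X : ℕ → Ω → ℝ) (hXmeas : ∀ n, AEMeasurable (X n) μ)
    (hXsymm : ∀ n, μ.map (X n) = μ.map (fun ω => -(X n ω)))
    (a : ℕ → ℝ)
    (hconv : ∀ f : BoundedContinuousFunction ℝ ℝ,
      Tendsto (fun n => ∫ ω, f (X n ω + a n) ∂μ) atTop
        (nhds (∫ x, f x ∂(gaussianReal 0 1)))) :
    Tendsto a atTop (nhds 0)
    ∧ ∀ f : BoundedContinuousFunction ℝ ℝ,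
        Tendsto (fun n => ∫ ω, f (X n ω) ∂μ) atTop
          (nhds (∫ x, f x ∂(gaussianReal 0 1))) := by
  set γ : ProbabilityMeasure ℝ := ⟨gaussianReal 0 1, inferInstance⟩
  have hlaw : ∀ n, μ.map (fun ω => X n ω + a n) = (μ.map (X n)).map (· + a n) := fun n =>
    (AEMeasurable.map_map_of_aemeasurable (g := (· + a n)) (by fun_prop) (hXmeas n)).symm
  have hshift : ∀ t, Tendsto (fun n => charFun ((μ.map (X n)).map (· + a n)) t) atTop
      (𝓝 (charFun (gaussianReal 0 1) t)) := by
    simp_rw [← hlaw]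
    exact ProbabilityMeasure.tendsto_iff_tendsto_charFun.1
      ((tendsto_probabilityMeasure_map_iff (P := γ) fun n => (hXmeas n).add_const (a n)).2 hconv)
  have ha : Tendsto a atTop (𝓝 0) := by
    refine tendsto_zero_of_forall_tendsto_cexp_mul fun t => ?_
    have h := hshift (t / 2)
    simp_rw [charFun_map_add_const, charFun_gaussianReal_zero_one] at h
    have := tendsto_cexp_two_mul_of_tendsto_mul_cexp
      (fun n => conj_charFun_map_of_map_neg (hXmeas n) (hXsymm n) (t / 2)) (Real.exp_pos _).ne' h
    convert this using 4 with n
    simp only [RCLike.inner_apply, Real.ringHom_apply]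
    push_cast
    ring
  refine ⟨ha, (tendsto_probabilityMeasure_map_iff (P := γ) hXmeas).1 ?_⟩
  exact ProbabilityMeasure.tendsto_of_tendsto_charFun fun t =>
    tendsto_charFun_of_tendsto_charFun_map_add_const ha (hshift t)
end
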